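/- arXiv:2405.14219 — 2 statements merged into one kernel-verified Lean document; each statement's English description precedes it below -/
import Mathlib

section
/- Define r₁ : ℝ → ℝ by r₁(a) = a·(2 − a) and r₂ : ℝ → ℝ by r₂(a) = a·(4 − a)/5. Then: (i) 2 − 3/2 = (4 − 3/2)/5, i.e. at the price ā = 3/2 the two expected demands coincide; (ii) r₁ is maximized over ℝ at a = 1 with maximum value 1, and r₂ is maximized over ℝ at a = 2 with maximum value 4/5; (iii) r₁(1) − r₁(3/2) = 1/4 and r₂(2) − r₂(3/2) = 1/20. Consequently, for every horizon T, playing the constant price 3/2 incurs cumulative regret T/4 in the first environment and T/20 in the second. -/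
open Finset

/-- Deterministic core of the linear-regret example for dynamic pricing
(Proposition 3): with expected revenues `r₁ a = a(2 - a)` and
`r₂ a = a(4 - a)/5`: (i) the expected demands coincide at the price `3/2`;
(ii) `r₁` is maximized at `1` with value `1` and `r₂` is maximized at `2` with
value `4/5`; (iii) the per-period regrets at price `3/2` are `1/4` and `1/20`;
hence the cumulative regret over `T` periods is `T/4`, resp. `T/20`. -/
theorem stmt8 :
    let r₁ : ℝ → ℝ := fun a => a * (2 - a)
    let r₂ : ℝ → ℝ := fun a => a * (4 - a) / 5
    ((2 : ℝ) - 3/2 = (4 - 3/2) / 5) ∧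
    ((∀ a : ℝ, r₁ a ≤ r₁ 1) ∧ r₁ 1 = 1) ∧
    ((∀ a : ℝ, r₂ a ≤ r₂ 2) ∧ r₂ 2 = 4/5) ∧
    (r₁ 1 - r₁ (3/2) = 1/4 ∧ r₂ 2 - r₂ (3/2) = 1/20) ∧
    (∀ T : ℕ,
      (∑ _t ∈ Finset.range T, (r₁ 1 - r₁ (3/2)) = (T : ℝ) / 4) ∧
      (∑ _t ∈ Finset.range T, (r₂ 2 - r₂ (3/2)) = (T : ℝ) / 20)) := by
  refine ⟨by norm_num, ⟨fun a => by show a*(2-a) ≤ 1*(2-1); nlinarith [sq_nonneg (a - 1)], by norm_num⟩,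
    ⟨fun a => by show a*(4-a)/5 ≤ 2*(4-2)/5; nlinarith [sq_nonneg (a - 2)], by norm_num⟩,
    ⟨by norm_num, by norm_num⟩, fun T => ?_⟩
  constructor <;> · rw [Finset.sum_const, Finset.card_range]; push_cast; ring
end

section
/- Let k ≥ 1, let p : Fin k → ℝ be a probability vector (p i ≥ 0 for all i and ∑_i p i = 1), and let c ∈ ℝ. If p 0 ≥ Real.exp c · p i for every i ≠ 0, then ∑_{i ≠ 0} p i ≤ (k − 1) / ((k − 1) + Real.exp c). -/
open Finset

/-- Posterior-concentration lemma from the proof of Proposition 4: if the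
posterior probability of the true environment (index `0`) dominates that of
every other environment by a factor `exp c`, then the total posterior mass of
the `k - 1` wrong environments is at most `(k-1) / ((k-1) + exp c)`. -/
theorem stmt9 (k : ℕ) (hk : 1 ≤ k) (p : Fin k → ℝ)
    (hp : ∀ i, 0 ≤ p i) (hpsum : ∑ i, p i = 1) (c : ℝ)
    (hdom : ∀ i : Fin k, i ≠ ⟨0, by omega⟩ → Real.exp c * p i ≤ p ⟨0, by omega⟩) :
    ∑ i ∈ Finset.univ.filter (fun i => i ≠ ⟨0, by omega⟩), p i ≤
      ((k : ℝ) - 1) / (((k : ℝ) - 1) + Real.exp c) := by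
  set i0 : Fin k := ⟨0, by omega⟩ with hi0
  set T : Finset (Fin k) := Finset.univ.filter (fun i => i ≠ i0) with hT
  have hTcard : (T.card : ℝ) = (k : ℝ) - 1 := by
    have : T = Finset.univ.erase i0 := by
      ext i; simp [hT, Finset.mem_erase, and_comm]
    rw [this, Finset.card_erase_of_mem (Finset.mem_univ _)]
    simp only [Finset.card_univ, Fintype.card_fin]
    have : 1 ≤ k := hk
    push_cast [Nat.cast_sub this]
    ring
  have hS0 : 0 ≤ ∑ i ∈ T, p i := Finset.sum_nonneg fun i _ => hp i
  have hsplit : p i0 + ∑ i ∈ T, p i = 1 := by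
    rw [← hpsum]
    rw [← Finset.sum_erase_add Finset.univ p (Finset.mem_univ i0)]
    have : T = Finset.univ.erase i0 := by
      ext i; simp [hT, Finset.mem_erase, and_comm]
    rw [this]; ring
  have hkey : Real.exp c * ∑ i ∈ T, p i ≤ ((k : ℝ) - 1) * p i0 := by
    rw [Finset.mul_sum]
    calc ∑ i ∈ T, Real.exp c * p i ≤ ∑ _i ∈ T, p i0 :=
          Finset.sum_le_sum fun i hi => hdom i (by simpa [hT] using hi)
      _ = (T.card : ℝ) * p i0 := by rw [Finset.sum_const, nsmul_eq_mul]
      _ = ((k : ℝ) - 1) * p i0 := by rw [hTcard]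
  have hec : 0 < Real.exp c := Real.exp_pos c
  have hk1 : (0 : ℝ) ≤ (k : ℝ) - 1 := by
    have : (1 : ℝ) ≤ (k : ℝ) := by exact_mod_cast hk
    linarith
  rw [le_div_iff₀ (by linarith)]
  nlinarith [hkey, hsplit, hS0]
end
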